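/- arXiv:2305.15339 — 7 statements merged into one kernel-verified Lean document; each statement's English description precedes it below -/
import Mathlib

section
/- Let μ₀ⁿ be the n-dimensional null-filiform associative algebra with basis e₁,…,eₙ and product eᵢeⱼ = e_{i+j} for i+j ≤ n (zero otherwise). Then a linear map D : μ₀ⁿ → μ₀ⁿ is a derivation if and only if there exist scalars α₁,…,αₙ ∈ ℂ such that D(eᵢ) = i·∑_{k=i}^{n} α_{k-i+1} e_k for all 1 ≤ i ≤ n. -/
/-- basis vectors -/
noncomputable def e (n : ℕ) (i : Fin n) : Fin n → ℂ := Pi.single i 1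

/-- product of the null-filiform algebra μ₀ⁿ (0-based indices: index a ↔ e_{a+1}) -/
noncomputable def mul0 (n : ℕ) (x y : Fin n → ℂ) : Fin n → ℂ :=
  fun k => ∑ i : Fin n, ∑ j : Fin n,
    if (i : ℕ) + (j : ℕ) + 1 = (k : ℕ) then x i * y j else 0

def IsDer {n : ℕ} (μ : (Fin n → ℂ) → (Fin n → ℂ) → Fin n → ℂ)
    (D : (Fin n → ℂ) →ₗ[ℂ] (Fin n → ℂ)) : Prop :=
  ∀ x y, D (μ x y) = μ (D x) y + μ x (D y)

def IsLocDer {n : ℕ} (μ : (Fin n → ℂ) → (Fin n → ℂ) → Fin n → ℂ)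
    (Δ : (Fin n → ℂ) →ₗ[ℂ] (Fin n → ℂ)) : Prop :=
  ∀ x, ∃ D, IsDer μ D ∧ Δ x = D x

/-- the submodule of derivations, given bilinearity of μ -/
noncomputable def derSubmodule (n : ℕ) (μ : (Fin n → ℂ) → (Fin n → ℂ) → Fin n → ℂ)
    (hal : ∀ x y z, μ (x + y) z = μ x z + μ y z)
    (har : ∀ x y z, μ x (y + z) = μ x y + μ x z)
    (hsl : ∀ (c : ℂ) x y, μ (c • x) y = c • μ x y)
    (hsr : ∀ (c : ℂ) x y, μ x (c • y) = c • μ x y) :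
    Submodule ℂ ((Fin n → ℂ) →ₗ[ℂ] (Fin n → ℂ)) where
  carrier := {D | IsDer μ D}
  zero_mem' := by
    intro x y
    have h1 : μ 0 y = 0 := by simpa using hsl 0 0 y
    have h2 : μ x 0 = 0 := by simpa using hsr 0 x 0
    simp [h1, h2]
  add_mem' := by
    intro D1 D2 h1 h2 x y
    simp only [LinearMap.add_apply, h1 x y, h2 x y, hal, har]
    abel
  smul_mem' := by
    intro c D hD x y
    simp only [LinearMap.smul_apply, hD x y, smul_add, hsl, hsr]

/-- the submodule of local derivations, given bilinearity of μ -/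
noncomputable def locDerSubmodule (n : ℕ) (μ : (Fin n → ℂ) → (Fin n → ℂ) → Fin n → ℂ)
    (hal : ∀ x y z, μ (x + y) z = μ x z + μ y z)
    (har : ∀ x y z, μ x (y + z) = μ x y + μ x z)
    (hsl : ∀ (c : ℂ) x y, μ (c • x) y = c • μ x y)
    (hsr : ∀ (c : ℂ) x y, μ x (c • y) = c • μ x y) :
    Submodule ℂ ((Fin n → ℂ) →ₗ[ℂ] (Fin n → ℂ)) where
  carrier := {Δ | IsLocDer μ Δ}
  zero_mem' := by
    intro x
    exact ⟨0, (derSubmodule n μ hal har hsl hsr).zero_mem, rfl⟩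
  add_mem' := by
    intro D1 D2 h1 h2 x
    obtain ⟨E1, hE1, he1⟩ := h1 x
    obtain ⟨E2, hE2, he2⟩ := h2 x
    exact ⟨E1 + E2, (derSubmodule n μ hal har hsl hsr).add_mem hE1 hE2, by
      simp [he1, he2]⟩
  smul_mem' := by
    intro c Δ hΔ x
    obtain ⟨E, hE, he⟩ := hΔ x
    exact ⟨c • E, (derSubmodule n μ hal har hsl hsr).smul_mem c hE, by simp [he]⟩

lemma mul0_add_left (n : ℕ) (x y z : Fin n → ℂ) :
    mul0 n (x + y) z = mul0 n x z + mul0 n y z := by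
  funext k
  simp only [mul0, Pi.add_apply]
  rw [← Finset.sum_add_distrib]
  refine Finset.sum_congr rfl fun i _ => ?_
  rw [← Finset.sum_add_distrib]
  refine Finset.sum_congr rfl fun j _ => ?_
  split <;> ring

lemma mul0_add_right (n : ℕ) (x y z : Fin n → ℂ) :
    mul0 n x (y + z) = mul0 n x y + mul0 n x z := by
  funext k
  simp only [mul0, Pi.add_apply]
  rw [← Finset.sum_add_distrib]
  refine Finset.sum_congr rfl fun i _ => ?_
  rw [← Finset.sum_add_distrib]
  refine Finset.sum_congr rfl fun j _ => ?_
  split <;> ring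

lemma mul0_smul_left (n : ℕ) (c : ℂ) (x y : Fin n → ℂ) :
    mul0 n (c • x) y = c • mul0 n x y := by
  funext k
  simp only [mul0, Pi.smul_apply, smul_eq_mul, Finset.mul_sum]
  refine Finset.sum_congr rfl fun i _ => ?_
  refine Finset.sum_congr rfl fun j _ => ?_
  split <;> ring

lemma mul0_smul_right (n : ℕ) (c : ℂ) (x y : Fin n → ℂ) :
    mul0 n x (c • y) = c • mul0 n x y := by
  funext k
  simp only [mul0, Pi.smul_apply, smul_eq_mul, Finset.mul_sum]
  refine Finset.sum_congr rfl fun i _ => ?_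
  refine Finset.sum_congr rfl fun j _ => ?_
  split <;> ring



lemma mul0_single_right (n : ℕ) (x : Fin n → ℂ) (b k : Fin n) :
    mul0 n x (e n b) k =
      if h : (b:ℕ)+1 ≤ (k:ℕ) then x ⟨(k:ℕ)-(b:ℕ)-1, lt_of_le_of_lt (by omega) k.isLt⟩
      else 0 := by
  show (∑ i : Fin n, ∑ j : Fin n, if (i:ℕ)+(j:ℕ)+1 = (k:ℕ) then x i * (Pi.single b 1 : Fin n → ℂ) j else 0) = _
  have : ∀ i : Fin n, (∑ j : Fin n, if (i:ℕ)+(j:ℕ)+1 = (k:ℕ) then x i * (Pi.single b 1 : Fin n → ℂ) j else 0)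
      = if (i:ℕ)+(b:ℕ)+1 = (k:ℕ) then x i else 0 := by
    intro i
    rw [Finset.sum_eq_single b]
    · simp [Pi.single_apply]
    · intro j _ hj; simp [Pi.single_apply, hj]
    · simp
  simp only [this]
  by_cases h : (b:ℕ)+1 ≤ (k:ℕ)
  · rw [dif_pos h, Finset.sum_eq_single (⟨(k:ℕ)-(b:ℕ)-1, lt_of_le_of_lt (by omega) k.isLt⟩ : Fin n)]
    · simp; omega
    · intro j _ hj
      rw [if_neg]
      intro hc
      exact hj (by apply Fin.ext; show (j:ℕ) = _; simp; omega)
    · simp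
  · rw [dif_neg h]
    apply Finset.sum_eq_zero
    intro i _
    rw [if_neg]; omega

lemma mul0_single_left (n : ℕ) (y : Fin n → ℂ) (a k : Fin n) :
    mul0 n (e n a) y k =
      if h : (a:ℕ)+1 ≤ (k:ℕ) then y ⟨(k:ℕ)-(a:ℕ)-1, lt_of_le_of_lt (by omega) k.isLt⟩
      else 0 := by
  show (∑ i : Fin n, ∑ j : Fin n, if (i:ℕ)+(j:ℕ)+1 = (k:ℕ) then (Pi.single a 1 : Fin n → ℂ) i * y j else 0) = _
  have : ∀ j : Fin n, (∑ i : Fin n, ∑ j' : Fin n, if (i:ℕ)+(j':ℕ)+1 = (k:ℕ) then (Pi.single a 1 : Fin n → ℂ) i * y j' else 0)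
      = ∑ j' : Fin n, if (a:ℕ)+(j':ℕ)+1 = (k:ℕ) then y j' else 0 := by
    intro j
    rw [Finset.sum_eq_single a]
    · apply Finset.sum_congr rfl; intro j' _; simp [Pi.single_apply]
    · intro i _ hi
      apply Finset.sum_eq_zero; intro j' _
      simp [Pi.single_apply, hi]
    · simp
  rw [this k]
  by_cases h : (a:ℕ)+1 ≤ (k:ℕ)
  · rw [dif_pos h, Finset.sum_eq_single (⟨(k:ℕ)-(a:ℕ)-1, lt_of_le_of_lt (by omega) k.isLt⟩ : Fin n)]
    · simp; omega
    · intro j _ hj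
      rw [if_neg]
      intro hc
      exact hj (by apply Fin.ext; show (j:ℕ) = _; simp; omega)
    · simp
  · rw [dif_neg h]
    apply Finset.sum_eq_zero
    intro i _
    rw [if_neg]; omega

lemma mul0_e_e (n : ℕ) (a b : Fin n) :
    mul0 n (e n a) (e n b) =
      if h : (a:ℕ)+(b:ℕ)+1 < n then e n ⟨(a:ℕ)+(b:ℕ)+1, h⟩ else 0 := by
  funext k
  rw [mul0_single_right, apply_dite (fun f : Fin n → ℂ => f k)]
  simp only [e, Pi.single_apply, Fin.ext_iff, Pi.zero_apply]
  split_ifs <;> first | rfl | (exfalso; omega) | omega | (simp_all; omega)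

/-- mul0 as a linear map in the left argument -/
noncomputable def mulLM (n : ℕ) (y : Fin n → ℂ) : (Fin n → ℂ) →ₗ[ℂ] (Fin n → ℂ) where
  toFun x := mul0 n x y
  map_add' a b := mul0_add_left n a b y
  map_smul' c x := mul0_smul_left n c x y

/-- mul0 as a linear map in the right argument -/
noncomputable def mulRM (n : ℕ) (x : Fin n → ℂ) : (Fin n → ℂ) →ₗ[ℂ] (Fin n → ℂ) where
  toFun y := mul0 n x y
  map_add' a b := mul0_add_right n x a b
  map_smul' c y := mul0_smul_right n c x y

lemma e_sum (n : ℕ) (x : Fin n → ℂ) : (∑ i : Fin n, x i • e n i) = x := by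
  funext k
  simp [e, Pi.single_apply, Finset.sum_ite_eq]

lemma mul0_expandL (n : ℕ) (x y : Fin n → ℂ) :
    mul0 n x y = ∑ i : Fin n, x i • mul0 n (e n i) y := by
  conv_lhs => rw [← e_sum n x]
  exact map_sum (mulLM n y) (fun i => x i • e n i) Finset.univ |>.trans
    (Finset.sum_congr rfl fun i _ => map_smul (mulLM n y) (x i) (e n i))

lemma mul0_expandR (n : ℕ) (x y : Fin n → ℂ) :
    mul0 n x y = ∑ j : Fin n, y j • mul0 n x (e n j) := by
  conv_lhs => rw [← e_sum n y]
  exact map_sum (mulRM n x) (fun j => y j • e n j) Finset.univ |>.trans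
    (Finset.sum_congr rfl fun j _ => map_smul (mulRM n x) (y j) (e n j))

lemma mul0_sum_left (n : ℕ) {ι : Type*} (s : Finset ι) (f : ι → Fin n → ℂ) (y : Fin n → ℂ) :
    mul0 n (∑ i ∈ s, f i) y = ∑ i ∈ s, mul0 n (f i) y :=
  map_sum (mulLM n y) f s

lemma mul0_sum_right (n : ℕ) {ι : Type*} (s : Finset ι) (f : ι → Fin n → ℂ) (x : Fin n → ℂ) :
    mul0 n x (∑ i ∈ s, f i) = ∑ i ∈ s, mul0 n x (f i) :=
  map_sum (mulRM n x) f s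

lemma isDer_of_basis (n : ℕ) (D : (Fin n → ℂ) →ₗ[ℂ] (Fin n → ℂ))
    (hb : ∀ a b : Fin n, D (mul0 n (e n a) (e n b)) =
      mul0 n (D (e n a)) (e n b) + mul0 n (e n a) (D (e n b))) :
    IsDer (mul0 n) D := by
  intro x y
  have hDx : D x = ∑ i : Fin n, x i • D (e n i) := by
    conv_lhs => rw [← e_sum n x]
    rw [map_sum]
    exact Finset.sum_congr rfl fun i _ => map_smul D (x i) (e n i)
  have hDy : D y = ∑ j : Fin n, y j • D (e n j) := by
    conv_lhs => rw [← e_sum n y]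
    rw [map_sum]
    exact Finset.sum_congr rfl fun j _ => map_smul D (y j) (e n j)
  have lhs : D (mul0 n x y) = ∑ i : Fin n, ∑ j : Fin n, x i • y j •
      (mul0 n (D (e n i)) (e n j) + mul0 n (e n i) (D (e n j))) := by
    rw [mul0_expandL n x y, map_sum]
    refine Finset.sum_congr rfl fun i _ => ?_
    rw [map_smul, mul0_expandR n (e n i) y, map_sum, Finset.smul_sum]
    refine Finset.sum_congr rfl fun j _ => ?_
    rw [map_smul, hb i j]
  have r1 : mul0 n (D x) y = ∑ i : Fin n, ∑ j : Fin n,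
      x i • y j • mul0 n (D (e n i)) (e n j) := by
    rw [hDx, mul0_sum_left]
    refine Finset.sum_congr rfl fun i _ => ?_
    rw [mul0_smul_left, mul0_expandR n (D (e n i)) y, Finset.smul_sum]
  have r2 : mul0 n x (D y) = ∑ i : Fin n, ∑ j : Fin n,
      x i • y j • mul0 n (e n i) (D (e n j)) := by
    rw [hDy, mul0_sum_right]
    have h2 : ∀ j, mul0 n x (y j • D (e n j)) =
        ∑ i : Fin n, x i • y j • mul0 n (e n i) (D (e n j)) := by
      intro j
      rw [mul0_smul_right, mul0_expandL n x (D (e n j)), Finset.smul_sum]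
      exact Finset.sum_congr rfl fun i _ => smul_comm _ _ _
    simp only [h2]
    exact Finset.sum_comm
  rw [lhs, r1, r2]
  simp only [smul_add, Finset.sum_add_distrib]

theorem stmt1 (n : ℕ) (D : (Fin n → ℂ) →ₗ[ℂ] (Fin n → ℂ)) :
    IsDer (mul0 n) D ↔
      ∃ α : Fin n → ℂ, ∀ a k : Fin n,
        D (e n a) k =
          if h : (a : ℕ) ≤ (k : ℕ) then
            (((a : ℕ) + 1 : ℕ) : ℂ) *
              α ⟨(k : ℕ) - (a : ℕ), lt_of_le_of_lt (Nat.sub_le _ _) k.isLt⟩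
          else 0 := by
  constructor
  · intro hD
    rcases Nat.eq_zero_or_pos n with hn | hn
    · subst hn
      exact ⟨fun k => k.elim0, fun a => a.elim0⟩
    refine ⟨D (e n ⟨0, hn⟩), ?_⟩
    have claim : ∀ m : ℕ, ∀ (ha : m < n), ∀ k : Fin n,
        D (e n ⟨m, ha⟩) k =
          if h : m ≤ (k:ℕ) then ((m + 1 : ℕ) : ℂ) *
            D (e n ⟨0, hn⟩) ⟨(k:ℕ) - m, lt_of_le_of_lt (Nat.sub_le _ _) k.isLt⟩
          else 0 := by
      intro m
      induction m with
      | zero =>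
        intro ha k
        rw [dif_pos (Nat.zero_le _)]
        norm_num
      | succ m ih =>
        intro ha k
        have ham : m < n := by omega
        have hmul : mul0 n (e n ⟨m, ham⟩) (e n ⟨0, hn⟩) = e n ⟨m+1, ha⟩ := by
          rw [mul0_e_e]
          rw [dif_pos (show ((⟨m, ham⟩ : Fin n):ℕ) + ((⟨0, hn⟩ : Fin n):ℕ) + 1 < n from by
            simp; omega)]
          exact congrArg _ (Fin.ext (by simp only [Fin.val_mk] <;> omega))
        have key := hD (e n ⟨m, ham⟩) (e n ⟨0, hn⟩)
        rw [hmul] at key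
        have keyk := congrFun key k
        rw [keyk, Pi.add_apply, mul0_single_right, mul0_single_left]
        simp only [ih ham, Fin.val_mk]
        have e1 : D (e n ⟨0, hn⟩) (⟨(k:ℕ)-0-1-m, by omega⟩ : Fin n) =
            D (e n ⟨0, hn⟩) ⟨(k:ℕ)-(m+1), by omega⟩ :=
          congrArg _ (Fin.ext (by simp only [Fin.val_mk] <;> omega))
        have e2 : D (e n ⟨0, hn⟩) (⟨(k:ℕ)-m-1, by omega⟩ : Fin n) =
            D (e n ⟨0, hn⟩) ⟨(k:ℕ)-(m+1), by omega⟩ :=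
          congrArg _ (Fin.ext (by simp only [Fin.val_mk] <;> omega))
        split_ifs <;> try (exfalso; omega)
        · rw [e1, e2]; push_cast; ring
        all_goals simp
    intro a k
    exact claim a.val a.isLt k
  · rintro ⟨α, hα⟩
    apply isDer_of_basis
    intro a b
    funext k
    rw [mul0_e_e, Pi.add_apply, mul0_single_right, mul0_single_left]
    simp only [hα]
    by_cases hc : (a:ℕ) + (b:ℕ) + 1 < n
    · rw [dif_pos hc, hα]
      simp only [Fin.val_mk]
      have e1 : α (⟨(k:ℕ)-(b:ℕ)-1-(a:ℕ), by omega⟩ : Fin n) =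
          α ⟨(k:ℕ)-((a:ℕ)+(b:ℕ)+1), by omega⟩ := by
        congr 1; exact Fin.ext (by simp; omega)
      have e2 : α (⟨(k:ℕ)-(a:ℕ)-1-(b:ℕ), by omega⟩ : Fin n) =
          α ⟨(k:ℕ)-((a:ℕ)+(b:ℕ)+1), by omega⟩ := by
        congr 1; exact Fin.ext (by simp; omega)
      split_ifs <;> try (exfalso; omega)
      · rw [e1, e2]; push_cast; ring
      all_goals simp
    · rw [dif_neg hc, map_zero]
      simp only [Pi.zero_apply]
      split_ifs <;> try (exfalso; omega)
      all_goals simp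
end

section
/- Every 2-local derivation on the n-dimensional null-filiform associative algebra μ₀ⁿ is a derivation. -/
lemma mul0_e (n : ℕ) (i j : Fin n) :
    mul0 n (e n i) (e n j) =
      if h : (i : ℕ) + (j : ℕ) + 1 < n then e n ⟨(i : ℕ) + (j : ℕ) + 1, h⟩ else 0 := by
  funext k
  simp only [mul0, e, Pi.single_apply]
  rw [Finset.sum_eq_single i, Finset.sum_eq_single j]
  · simp only [Pi.single_eq_same, mul_one]
    split_ifs with h1 h2 h2
    · have hk : k = (⟨(i : ℕ) + (j : ℕ) + 1, h2⟩ : Fin n) := by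
        rw [Fin.ext_iff]; simpa using h1.symm
      subst hk; rw [Pi.single_eq_same, one_mul]
    · exact absurd k.2 (by omega)
    · rw [Pi.single_apply, if_neg (by simp only [Fin.ext_iff]; omega)]
    · simp
  · intro b _ hb
    simp [hb]
  · simp
  · intro a _ ha
    rw [Finset.sum_eq_zero]
    intro b _
    simp [ha]
  · simp

lemma der_ext {n : ℕ} (hn : 0 < n) (D1 D2 : (Fin n → ℂ) →ₗ[ℂ] (Fin n → ℂ))
    (h1 : IsDer (mul0 n) D1) (h2 : IsDer (mul0 n) D2)
    (hb : D1 (e n ⟨0, hn⟩) = D2 (e n ⟨0, hn⟩)) : D1 = D2 := by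
  have H : ∀ k (hk : k < n), D1 (e n ⟨k, hk⟩) = D2 (e n ⟨k, hk⟩) := by
    intro k
    induction k with
    | zero => intro hk; exact hb
    | succ m ih =>
      intro hk
      have hm : m < n := Nat.lt_of_succ_lt hk
      have key : e n ⟨m + 1, hk⟩ = mul0 n (e n ⟨0, hn⟩) (e n ⟨m, hm⟩) := by
        rw [mul0_e]
        simp only [Fin.val_mk, Nat.zero_add]
        rw [dif_pos hk]
      rw [key, h1, h2, ih hm, hb]
  apply (Pi.basisFun ℂ (Fin n)).ext
  intro i
  have := H i.1 i.2
  simpa [e, Pi.basisFun_apply] using this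

theorem stmt4 (n : ℕ) (nabla : (Fin n → ℂ) → (Fin n → ℂ))
    (h : ∀ x y : Fin n → ℂ, ∃ D : (Fin n → ℂ) →ₗ[ℂ] (Fin n → ℂ),
      IsDer (mul0 n) D ∧ nabla x = D x ∧ nabla y = D y) :
    ∃ D : (Fin n → ℂ) →ₗ[ℂ] (Fin n → ℂ), IsDer (mul0 n) D ∧ ∀ x, nabla x = D x := by
  rcases Nat.eq_zero_or_pos n with hn | hn
  · subst hn
    obtain ⟨D, hD, hx, -⟩ := h 0 0
    exact ⟨D, hD, fun x => by
      have hx0 : x = 0 := Subsingleton.elim _ _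
      rw [hx0, hx]⟩
  · obtain ⟨D0, hD0, he0, -⟩ := h (e n ⟨0, hn⟩) (e n ⟨0, hn⟩)
    refine ⟨D0, hD0, fun x => ?_⟩
    obtain ⟨Dx, hDx, hxx, hxe⟩ := h x (e n ⟨0, hn⟩)
    have : Dx = D0 := der_ext hn Dx D0 hDx hD0 (by rw [← hxe, he0])
    rw [hxx, this]
end

section
/- Let ∇ be a 2-local derivation on the null-filiform associative algebra μ₀ⁿ such that ∇(e₁) = 0. Then ∇ = 0. -/
lemma mul0_zero_left (n : ℕ) (y : Fin n → ℂ) : mul0 n 0 y = 0 := by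
  simpa using mul0_smul_left n 0 0 y

lemma mul0_zero_right (n : ℕ) (x : Fin n → ℂ) : mul0 n x 0 = 0 := by
  simpa using mul0_smul_right n 0 x 0

lemma mul0_single (n : ℕ) (i j : Fin n) :
    mul0 n (e n i) (e n j) = fun k : Fin n => if (i : ℕ) + (j : ℕ) + 1 = (k : ℕ) then (1 : ℂ) else 0 := by
  funext k
  simp only [mul0, e, Pi.single_apply]
  rw [Finset.sum_eq_single i]
  · rw [Finset.sum_eq_single j]
    · simp
    · intro b _ hb; simp [hb]
    · simp
  · intro a _ ha
    apply Finset.sum_eq_zero; intro b _; simp [ha]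
  · simp

lemma der_zero {n : ℕ} (hn : 0 < n) (D : (Fin n → ℂ) →ₗ[ℂ] (Fin n → ℂ))
    (hD : IsDer (mul0 n) D) (h0 : D (e n ⟨0, hn⟩) = 0) : ∀ i, D (e n i) = 0 := by
  suffices H : ∀ m (h : m < n), D (e n ⟨m, h⟩) = 0 by
    intro i; exact H i.1 i.2
  intro m
  induction m with
  | zero => intro h; exact h0
  | succ k ih =>
    intro h
    have hk : k < n := Nat.lt_of_succ_lt h
    have key : e n ⟨k + 1, h⟩ = mul0 n (e n ⟨0, hn⟩) (e n ⟨k, hk⟩) := by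
      rw [mul0_single]
      funext k'
      simp [e, Pi.single_apply, Fin.ext_iff, eq_comm]
    rw [key, hD, h0, ih hk, mul0_zero_left, mul0_zero_right]
    simp

theorem stmt5 (n : ℕ) (hn : 0 < n) (nabla : (Fin n → ℂ) → (Fin n → ℂ))
    (h : ∀ x y : Fin n → ℂ, ∃ D : (Fin n → ℂ) →ₗ[ℂ] (Fin n → ℂ),
      IsDer (mul0 n) D ∧ nabla x = D x ∧ nabla y = D y)
    (h1 : nabla (e n ⟨0, hn⟩) = 0) :
    ∀ x, nabla x = 0 := by
  intro x
  obtain ⟨D, hD, hx, he⟩ := h x (e n ⟨0, hn⟩)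
  have h0 : D (e n ⟨0, hn⟩) = 0 := by rw [← he, h1]
  have hei := der_zero hn D hD h0
  have hxsum : x = ∑ i : Fin n, x i • e n i := by
    funext k
    simp [e, Finset.sum_apply, Pi.single_apply, eq_comm]
  rw [hx, hxsum, map_sum]
  simp only [map_smul, hei, smul_zero]
  simp
end

section
/- The space of local derivations of the n-dimensional null-filiform associative algebra μ₀ⁿ has dimension n(n+1)/2 over ℂ. -/
/-!
Write `μ₀ⁿ = tℂ[t]/(t^(n+1))` with `e_k = t^k`. Since `e_{k+1} = e₁ e_k`, the Leibniz rule and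
induction on `k` show that a derivation maps `e_k` into `span {e_k, …, e_n}` (a power of the
maximal ideal), so every local derivation is lower triangular. Conversely the maps
`D_b = (∑ⱼ b_j t^j) d/dt` are derivations, and if the lowest nonzero coordinate of `x` sits
at `e_m`, then `b ↦ D_b x` is triangular onto `span {e_m, …, e_n}` with diagonal entry
`m x_m ≠ 0`; a lower-triangular `Δ` sends `x` into that span, so `Δ x = D_b x` for some `b`.
Hence the local derivations are exactly the lower-triangular maps, of dimension `n(n+1)/2`.
-/

theorem LinearMap.leibniz_of_basis {ι R M : Type*} [CommSemiring R] [AddCommMonoid M]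
    [Module R M] (μ : M →ₗ[R] M →ₗ[R] M) (v : Module.Basis ι R M) (D : M →ₗ[R] M)
    (h : ∀ i j, D (μ (v i) (v j)) = μ (D (v i)) (v j) + μ (v i) (D (v j))) (x y : M) :
    D (μ x y) = μ (D x) y + μ x (D y) := by
  have key : μ.compr₂ D = μ ∘ₗ D + μ.compl₂ D := LinearMap.ext_basis v v h
  exact LinearMap.congr_fun₂ key x y

namespace NullFiliform

variable {n : ℕ}

noncomputable def mulL (n : ℕ) : (Fin n → ℂ) →ₗ[ℂ] (Fin n → ℂ) →ₗ[ℂ] (Fin n → ℂ) :=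
  LinearMap.mk₂ ℂ (mul0 n) (mul0_add_left n) (mul0_smul_left n) (mul0_add_right n)
    (mul0_smul_right n)

@[simp]
theorem mulL_apply (x y : Fin n → ℂ) : mulL n x y = mul0 n x y := rfl

/-- `basisVec n k` is the paper's `e_{k+1}`; it is `0` for `k ≥ n`, so that
`e_{i+1} e_{j+1} = e_{i+j+2}` holds for all `i j : ℕ`. -/
def basisVec (n k : ℕ) : Fin n → ℂ := fun s => if (s : ℕ) = k then 1 else 0

theorem basisVec_fin (a : Fin n) : basisVec n a = Pi.single a 1 := by
  ext s
  simp [basisVec, Pi.single_apply, Fin.val_eq_val]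

theorem basisVec_of_le {k : ℕ} (hk : n ≤ k) : basisVec n k = 0 := by
  ext s
  exact if_neg (s.isLt.trans_le hk).ne

theorem sum_smul_basisVec (x : Fin n → ℂ) : ∑ a : Fin n, x a • basisVec n a = x := by
  ext s
  simp [basisVec_fin, Finset.sum_apply, Pi.single_apply]

theorem mul0_basisVec (i j : ℕ) :
    mul0 n (basisVec n i) (basisVec n j) = basisVec n (i + j + 1) := by
  rcases le_or_gt n i with hi | hi
  · rw [basisVec_of_le hi, basisVec_of_le (show n ≤ i + j + 1 by omega), ← mulL_apply, map_zero,
      LinearMap.zero_apply]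
  rcases le_or_gt n j with hj | hj
  · rw [basisVec_of_le hj, basisVec_of_le (show n ≤ i + j + 1 by omega), ← mulL_apply, map_zero]
  ext k
  rw [show i = ((⟨i, hi⟩ : Fin n) : ℕ) from rfl, show j = ((⟨j, hj⟩ : Fin n) : ℕ) from rfl,
    basisVec_fin, basisVec_fin, mul0, Fintype.sum_eq_single ⟨i, hi⟩, Fintype.sum_eq_single ⟨j, hj⟩]
  · simp [basisVec, eq_comm]
  · intro b hb
    simp [hb]
  · intro a ha
    simp [ha]

/-- `filtration n m` is spanned by the `e_{k+1}` with `k ≥ m`; it is the power `(μ₀ⁿ)^(m+1)`. -/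
def filtration (n m : ℕ) : Submodule ℂ (Fin n → ℂ) where
  carrier := {x | ∀ s : Fin n, (s : ℕ) < m → x s = 0}
  add_mem' hx hy s hs := by simp [hx s hs, hy s hs]
  zero_mem' _ _ := rfl
  smul_mem' c x hx s hs := by simp [hx s hs]

theorem mem_filtration_zero (x : Fin n → ℂ) : x ∈ filtration n 0 :=
  fun _ hs => absurd hs (Nat.not_lt_zero _)

theorem filtration_antitone : Antitone (filtration n) :=
  fun _ _ hkm _ hx s hs => hx s (lt_of_lt_of_le hs hkm)

theorem filtration_eq_bot {m : ℕ} (hm : n ≤ m) : filtration n m = ⊥ :=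
  eq_bot_iff.mpr fun x hx => funext fun s => hx s (by omega)

theorem mem_filtration_succ {m : ℕ} {x : Fin n → ℂ} (hx : x ∈ filtration n m)
    (hxm : ∀ h : m < n, x ⟨m, h⟩ = 0) : x ∈ filtration n (m + 1) := by
  intro s hs
  rcases Nat.lt_succ_iff_lt_or_eq.mp hs with hs | hs
  · exact hx s hs
  · subst hs
    exact hxm s.isLt

theorem basisVec_mem_filtration (k : ℕ) : basisVec n k ∈ filtration n k :=
  fun _ hs => if_neg hs.ne

theorem mul0_mem_filtration {i j : ℕ} {x y : Fin n → ℂ} (hx : x ∈ filtration n i)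
    (hy : y ∈ filtration n j) : mul0 n x y ∈ filtration n (i + j + 1) := by
  intro k hk
  refine Finset.sum_eq_zero fun a _ => Finset.sum_eq_zero fun b _ => ?_
  split_ifs with hab
  · rcases lt_or_ge (a : ℕ) i with ha | ha
    · rw [hx a ha, zero_mul]
    · rw [hy b (by omega), mul_zero]
  · rfl

theorem exists_mem_filtration_apply_ne_zero {x : Fin n → ℂ} (hx : x ≠ 0) :
    ∃ m : Fin n, x ∈ filtration n m ∧ x m ≠ 0 := by
  obtain ⟨m, hm, hmin⟩ := wellFounded_lt.has_min {a | x a ≠ 0} (Function.ne_iff.mp hx)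
  exact ⟨m, fun s hs => not_not.mp fun hs' => hmin s hs' hs, hm⟩

theorem map_mem_filtration {Δ : Module.End ℂ (Fin n → ℂ)} {u m : ℕ}
    (hΔ : ∀ a : Fin n, Δ (basisVec n a) ∈ filtration n (a + u)) {x : Fin n → ℂ}
    (hx : x ∈ filtration n m) : Δ x ∈ filtration n (m + u) := by
  rw [← sum_smul_basisVec x, map_sum]
  refine Submodule.sum_mem _ fun a _ => ?_
  rcases lt_or_ge (a : ℕ) m with ha | ha
  · simp [hx a ha]
  · rw [map_smul]
    exact Submodule.smul_mem _ _ (filtration_antitone (by omega) (hΔ a))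

theorem _root_.IsDer.apply_basisVec_mem_filtration {D : Module.End ℂ (Fin n → ℂ)}
    (hD : IsDer (mul0 n) D) (k : ℕ) : D (basisVec n k) ∈ filtration n k := by
  induction k with
  | zero => exact mem_filtration_zero _
  | succ k ih =>
    have hprod := hD (basisVec n 0) (basisVec n k)
    rw [mul0_basisVec, zero_add] at hprod
    rw [hprod]
    refine Submodule.add_mem _ ?_ ?_
    · simpa using
        mul0_mem_filtration (mem_filtration_zero (D (basisVec n 0))) (basisVec_mem_filtration k)
    · simpa using mul0_mem_filtration (basisVec_mem_filtration 0) ih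

/-- The derivation of `tℂ[t]/(t^(n+1))` with `t ↦ ∑ⱼ b j t^(j+1)`, which sends
`e_{a+1} = t^(a+1)` to `(a + 1) ∑ⱼ b j e_{a+j+1}`. -/
noncomputable def der (n : ℕ) : (Fin n → ℂ) →ₗ[ℂ] Module.End ℂ (Fin n → ℂ) :=
  (Pi.basisFun ℂ (Fin n)).constr ℂ fun t =>
    (Pi.basisFun ℂ (Fin n)).constr ℂ fun a => ((a : ℂ) + 1) • basisVec n (a + t)

theorem der_basisVec_basisVec (t : Fin n) (k : ℕ) :
    der n (basisVec n t) (basisVec n k) = ((k : ℂ) + 1) • basisVec n (k + t) := by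
  rcases lt_or_ge k n with hk | hk
  · rw [show k = ((⟨k, hk⟩ : Fin n) : ℕ) from rfl, basisVec_fin, basisVec_fin, der,
      ← Pi.basisFun_apply, Module.Basis.constr_basis, ← Pi.basisFun_apply,
      Module.Basis.constr_basis]
  · rw [basisVec_of_le hk, basisVec_of_le (show n ≤ k + t by omega), map_zero, smul_zero]

theorem isDer_der_basisVec (t : Fin n) : IsDer (mul0 n) (der n (basisVec n t)) := by
  refine LinearMap.leibniz_of_basis (mulL n) (Pi.basisFun ℂ (Fin n)) _ fun i j => ?_
  simp only [Pi.basisFun_apply, ← basisVec_fin, mulL_apply, mul0_basisVec, der_basisVec_basisVec,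
    mul0_smul_left, mul0_smul_right]
  rw [show (i : ℕ) + t + j + 1 = i + j + 1 + t by omega,
    show (i : ℕ) + (j + t) + 1 = i + j + 1 + t by omega, ← add_smul]
  congr 1
  push_cast
  ring

theorem isDer_der (b : Fin n → ℂ) : IsDer (mul0 n) (der n b) := by
  let derivations := derSubmodule n (mul0 n) (mul0_add_left n) (mul0_add_right n)
    (mul0_smul_left n) (mul0_smul_right n)
  change der n b ∈ derivations
  rw [← sum_smul_basisVec b, map_sum]
  exact Submodule.sum_mem _ fun t _ => by
    rw [map_smul]
    exact derivations.smul_mem _ (isDer_der_basisVec t)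

theorem der_basisVec_mem_filtration (u : Fin n) {m : ℕ} {x : Fin n → ℂ}
    (hx : x ∈ filtration n m) : der n (basisVec n u) x ∈ filtration n (m + u) :=
  map_mem_filtration (fun a => by
    rw [der_basisVec_basisVec]
    exact Submodule.smul_mem _ _ (basisVec_mem_filtration _)) hx

theorem der_basisVec_apply (u m : Fin n) (x : Fin n → ℂ) (h : m + u < n) :
    der n (basisVec n u) x ⟨m + u, h⟩ = ((m : ℂ) + 1) * x m := by
  conv_lhs => rw [← sum_smul_basisVec x]
  simp only [map_sum, map_smul, der_basisVec_basisVec, Finset.sum_apply, Pi.smul_apply,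
    smul_eq_mul]
  rw [Fintype.sum_eq_single m]
  · simp [basisVec, mul_comm]
  · intro a ha
    simp [basisVec, Fin.val_inj, Ne.symm ha]

theorem exists_der_apply_eq {m : Fin n} {x r : Fin n → ℂ} (hx : x ∈ filtration n m)
    (hxm : x m ≠ 0) (hr : r ∈ filtration n m) : ∃ b, der n b x = r := by
  -- correct `b` so as to kill the coefficients of `r - der n b x` one index at a time
  have key : ∀ u : ℕ, ∃ b, r - der n b x ∈ filtration n (m + u) := by
    intro u
    induction u with
    | zero => exact ⟨0, by simpa using hr⟩
    | succ u ih =>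
      obtain ⟨b, hb⟩ := ih
      by_cases hu : m + u < n
      · set y := r - der n b x
        set c := y ⟨m + u, hu⟩ / (((m : ℂ) + 1) * x m)
        let v : Fin n := ⟨u, by omega⟩
        refine ⟨b + c • basisVec n v, ?_⟩
        have hy : r - der n (b + c • basisVec n v) x = y - c • der n (basisVec n v) x := by
          simp only [y, map_add, map_smul, LinearMap.add_apply, LinearMap.smul_apply]
          abel
        rw [hy]
        refine mem_filtration_succ (sub_mem hb (Submodule.smul_mem _ _
          (der_basisVec_mem_filtration v hx))) fun h => ?_
        have hm1 : ((m : ℂ) + 1) * x m ≠ 0 := mul_ne_zero (Nat.cast_add_one_ne_zero _) hxm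
        change y ⟨m + u, hu⟩ - c • der n (basisVec n v) x ⟨m + v, hu⟩ = 0
        rw [der_basisVec_apply v m x hu, smul_eq_mul, div_mul_cancel₀ _ hm1, sub_self]
      · exact ⟨b, mem_filtration_succ hb fun h => absurd h hu⟩
  obtain ⟨b, hb⟩ := key n
  rw [filtration_eq_bot (by omega), Submodule.mem_bot, sub_eq_zero] at hb
  exact ⟨b, hb.symm⟩

def upperEntries (n : ℕ) :
    Module.End ℂ (Fin n → ℂ) →ₗ[ℂ] ({p : Fin n × Fin n // p.2 < p.1} → ℂ) where
  toFun Δ p := Δ (basisVec n p.1.1) p.1.2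
  map_add' _ _ := rfl
  map_smul' _ _ := rfl

def lowerTriangular (n : ℕ) : Submodule ℂ (Module.End ℂ (Fin n → ℂ)) :=
  LinearMap.ker (upperEntries n)

theorem mem_lowerTriangular {Δ : Module.End ℂ (Fin n → ℂ)} :
    Δ ∈ lowerTriangular n ↔ ∀ a : Fin n, Δ (basisVec n a) ∈ filtration n a := by
  simp only [lowerTriangular, LinearMap.mem_ker, funext_iff, Subtype.forall, Prod.forall]
  rfl

theorem upperEntries_surjective : Function.Surjective (upperEntries n) := by
  intro c
  refine ⟨Matrix.toLin' (Matrix.of fun s a => if h : s < a then c ⟨(a, s), h⟩ else 0), ?_⟩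
  ext p
  simp [upperEntries, basisVec_fin, Matrix.toLin'_apply, Matrix.mulVec_single, p.2]

theorem finrank_lowerTriangular : Module.finrank ℂ (lowerTriangular n) = n * (n + 1) / 2 := by
  have hrank := LinearMap.finrank_range_add_finrank_ker (upperEntries n)
  rw [LinearMap.range_eq_top.mpr upperEntries_surjective, finrank_top,
    Module.finrank_fintype_fun_eq_card, Module.finrank_linearMap, Module.finrank_fin_fun] at hrank
  have hupper : Fintype.card {p : Fin n × Fin n // p.2 < p.1}
      = n * n - Fintype.card {p : Fin n × Fin n // p.1 ≤ p.2} := by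
    simp_rw [← not_le]
    rw [Fintype.card_subtype_compl, Fintype.card_prod, Fintype.card_fin]
  have hlower : Fintype.card {p : Fin n × Fin n // p.1 ≤ p.2} = n * (n + 1) / 2 := by
    rw [← Fintype.card_congr Sym2.sortEquiv, Sym2.card, Fintype.card_fin, Nat.choose_two_right,
      Nat.add_sub_cancel, mul_comm]
  have hle := Fintype.card_subtype_le fun p : Fin n × Fin n => p.1 ≤ p.2
  rw [Fintype.card_prod, Fintype.card_fin] at hle
  change _ + Module.finrank ℂ (lowerTriangular n) = _ at hrank
  omega

theorem locDerSubmodule_mul0_eq :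
    locDerSubmodule n (mul0 n) (mul0_add_left n) (mul0_add_right n) (mul0_smul_left n)
      (mul0_smul_right n) = lowerTriangular n := by
  apply le_antisymm
  · intro Δ hΔ
    refine mem_lowerTriangular.mpr fun a => ?_
    obtain ⟨D, hD, hDa⟩ := hΔ (basisVec n a)
    exact hDa ▸ hD.apply_basisVec_mem_filtration a
  · intro Δ hΔ x
    rcases eq_or_ne x 0 with rfl | hx
    · exact ⟨der n 0, isDer_der 0, by simp⟩
    obtain ⟨m, hxm, hm⟩ := exists_mem_filtration_apply_ne_zero hx
    obtain ⟨b, hb⟩ := exists_der_apply_eq hxm hm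
      (map_mem_filtration (u := 0) (mem_lowerTriangular.mp hΔ) hxm)
    exact ⟨der n b, isDer_der b, hb.symm⟩

end NullFiliform

theorem stmt8_general (n : ℕ) :
    Module.finrank ℂ
      (locDerSubmodule n (mul0 n) (mul0_add_left n) (mul0_add_right n)
        (mul0_smul_left n) (mul0_smul_right n)) = n * (n + 1) / 2 := by
  rw [NullFiliform.locDerSubmodule_mul0_eq, NullFiliform.finrank_lowerTriangular]

theorem stmt8 (n : ℕ) (hn : 0 < n) :
    Module.finrank ℂ
      (locDerSubmodule n (mul0 n) (mul0_add_left n) (mul0_add_right n)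
        (mul0_smul_left n) (mul0_smul_right n)) = n * (n + 1) / 2 :=
  stmt8_general n
end

section
/- Let A₁ be the 3-dimensional complex algebra with basis e₁,e₂,e₃ and only nonzero product e₁e₁ = e₂. A linear map Δ on A₁ is a local derivation if and only if Δ(e₁) ∈ span{e₁,e₂,e₃}, Δ(e₂) ∈ span{e₂}, and Δ(e₃) ∈ span{e₂,e₃}. Consequently the space of local derivations of A₁ has dimension 6, while Der(A₁) has dimension 5, so A₁ admits a local derivation which is not a derivation. -/
noncomputable def mulA1 (x y : Fin 3 → ℂ) : Fin 3 → ℂ :=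
  fun k => if k = 1 then x 0 * y 0 else 0

lemma mulA1_add_left (x y z : Fin 3 → ℂ) :
    mulA1 (x + y) z = mulA1 x z + mulA1 y z := by
  funext k
  simp only [mulA1, Pi.add_apply]
  split <;> try split
  all_goals ring

lemma mulA1_add_right (x y z : Fin 3 → ℂ) :
    mulA1 x (y + z) = mulA1 x y + mulA1 x z := by
  funext k
  simp only [mulA1, Pi.add_apply]
  split <;> try split
  all_goals ring

lemma mulA1_smul_left (c : ℂ) (x y : Fin 3 → ℂ) :
    mulA1 (c • x) y = c • mulA1 x y := by
  funext k
  simp only [mulA1, Pi.smul_apply, smul_eq_mul, mul_ite, mul_zero]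
  split <;> try split
  all_goals ring

lemma mulA1_smul_right (c : ℂ) (x y : Fin 3 → ℂ) :
    mulA1 x (c • y) = c • mulA1 x y := by
  funext k
  simp only [mulA1, Pi.smul_apply, smul_eq_mul, mul_ite, mul_zero]
  split <;> try split
  all_goals ring

noncomputable def colMap (u v w : Fin 3 → ℂ) : (Fin 3 → ℂ) →ₗ[ℂ] (Fin 3 → ℂ) where
  toFun x := x 0 • u + x 1 • v + x 2 • w
  map_add' x y := by simp only [Pi.add_apply, add_smul]; module
  map_smul' c x := by simp only [Pi.smul_apply, smul_eq_mul, mul_smul, RingHom.id_apply]; module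

lemma basis_decomp (x : Fin 3 → ℂ) :
    x = x 0 • e 3 0 + x 1 • e 3 1 + x 2 • e 3 2 := by
  funext k
  fin_cases k <;> simp [e, Pi.single_apply]

@[simp] lemma colMap_e0 (u v w : Fin 3 → ℂ) : colMap u v w (e 3 0) = u := by
  simp [colMap, e, Pi.single_apply]
@[simp] lemma colMap_e1 (u v w : Fin 3 → ℂ) : colMap u v w (e 3 1) = v := by
  simp [colMap, e, Pi.single_apply]
@[simp] lemma colMap_e2 (u v w : Fin 3 → ℂ) : colMap u v w (e 3 2) = w := by
  simp [colMap, e, Pi.single_apply]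

noncomputable def genDer (a b c f g : ℂ) : (Fin 3 → ℂ) →ₗ[ℂ] (Fin 3 → ℂ) :=
  colMap ![a, b, c] ![0, 2 * a, 0] ![0, f, g]

lemma mulA1_eq (x y : Fin 3 → ℂ) : mulA1 x y = (x 0 * y 0) • e 3 1 := by
  funext k
  fin_cases k <;> simp [mulA1, e, Pi.single_apply]

lemma genDer_isDer (a b c f g : ℂ) : IsDer mulA1 (genDer a b c f g) := by
  intro x y
  funext k
  fin_cases k <;>
    simp [genDer, colMap, mulA1, e, Pi.single_apply] <;> ring

lemma isDer_iff (D : (Fin 3 → ℂ) →ₗ[ℂ] (Fin 3 → ℂ)) :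
    IsDer mulA1 D ↔
      D (e 3 1) 0 = 0 ∧ D (e 3 1) 2 = 0 ∧ D (e 3 2) 0 = 0 ∧
        D (e 3 1) 1 = 2 * D (e 3 0) 0 := by
  constructor
  · intro h
    have h1 := h (e 3 0) (e 3 0)
    have h2 := h (e 3 0) (e 3 2)
    rw [mulA1_eq, mulA1_eq] at h1 h2
    have he1 : ((e 3 0 : Fin 3 → ℂ) 0 * (e 3 0 : Fin 3 → ℂ) 0) = 1 := by
      simp [e, Pi.single_apply]
    have he2 : ((e 3 0 : Fin 3 → ℂ) 0 * (e 3 2 : Fin 3 → ℂ) 0) = 0 := by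
      simp [e, Pi.single_apply]
    rw [he1, one_smul] at h1
    rw [he2, zero_smul, map_zero] at h2
    refine ⟨?_, ?_, ?_, ?_⟩
    · have := congrFun h1 0
      simpa [mulA1, e, Pi.single_apply] using this
    · have := congrFun h1 2
      simpa [mulA1, e, Pi.single_apply] using this
    · have := congrFun h2.symm 1
      simpa [mulA1, e, Pi.single_apply] using this
    · have := congrFun h1 1
      simpa [mulA1, e, Pi.single_apply, two_mul] using this
  · rintro ⟨h1, h2, h3, h4⟩ x y
    have hDx : D x 0 = x 0 * D (e 3 0) 0 := by
      conv_lhs => rw [basis_decomp x]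
      simp [h1, h3]
    have hDy : D y 0 = y 0 * D (e 3 0) 0 := by
      conv_lhs => rw [basis_decomp y]
      simp [h1, h3]
    rw [mulA1_eq x y, map_smul]
    funext k
    fin_cases k <;>
      simp [mulA1, hDx, hDy, h1, h2, h4, Pi.smul_apply, smul_eq_mul] <;> ring

lemma isLocDer_iff (Δ : (Fin 3 → ℂ) →ₗ[ℂ] (Fin 3 → ℂ)) :
    IsLocDer mulA1 Δ ↔
      Δ (e 3 1) 0 = 0 ∧ Δ (e 3 1) 2 = 0 ∧ Δ (e 3 2) 0 = 0 := by
  constructor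
  · intro h
    obtain ⟨D1, hD1, he1⟩ := h (e 3 1)
    obtain ⟨D2, hD2, he2⟩ := h (e 3 2)
    rw [isDer_iff] at hD1 hD2
    exact ⟨by rw [he1]; exact hD1.1, by rw [he1]; exact hD1.2.1,
      by rw [he2]; exact hD2.2.2.1⟩
  · rintro ⟨h1, h2, h3⟩ x
    have hcomp : ∀ k, Δ x k = x 0 * Δ (e 3 0) k + x 1 * Δ (e 3 1) k + x 2 * Δ (e 3 2) k := by
      intro k
      conv_lhs => rw [basis_decomp x]
      simp
    by_cases hx0 : x 0 = 0
    · have hp0 : Δ x 0 = 0 := by rw [hcomp 0, hx0, h1, h3]; ring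
      by_cases hx2 : x 2 = 0
      · have hp2 : Δ x 2 = 0 := by rw [hcomp 2, hx0, hx2, h2]; ring
        by_cases hx1 : x 1 = 0
        · have hx : x = 0 := by funext k; fin_cases k <;> assumption
          exact ⟨genDer 0 0 0 0 0, genDer_isDer _ _ _ _ _, by rw [hx]; simp⟩
        · refine ⟨genDer (Δ x 1 / (2 * x 1)) 0 0 0 0, genDer_isDer _ _ _ _ _, ?_⟩
          funext k
          fin_cases k
          · simpa [genDer, colMap, hx0] using hp0
          · simp [genDer, colMap, hx0, hx2]
            field_simp
          · simpa [genDer, colMap, hx0, hx2] using hp2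
      · refine ⟨genDer 0 0 0 (Δ x 1 / x 2) (Δ x 2 / x 2), genDer_isDer _ _ _ _ _, ?_⟩
        funext k
        fin_cases k
        · simpa [genDer, colMap, hx0] using hp0
        · simp [genDer, colMap, hx0]
          field_simp
        · simp [genDer, colMap, hx0]
          field_simp
    · refine ⟨genDer (Δ x 0 / x 0) ((Δ x 1 - 2 * (Δ x 0 / x 0) * x 1) / x 0) (Δ x 2 / x 0) 0 0,
        genDer_isDer _ _ _ _ _, ?_⟩
      funext k
      fin_cases k <;> simp [genDer, colMap] <;> field_simp <;> ring

noncomputable def L3 : ((Fin 3 → ℂ) →ₗ[ℂ] (Fin 3 → ℂ)) →ₗ[ℂ] (Fin 3 → ℂ) where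
  toFun Δ := ![Δ (e 3 1) 0, Δ (e 3 1) 2, Δ (e 3 2) 0]
  map_add' D E := by funext k; fin_cases k <;> simp
  map_smul' c D := by funext k; fin_cases k <;> simp

noncomputable def L4 : ((Fin 3 → ℂ) →ₗ[ℂ] (Fin 3 → ℂ)) →ₗ[ℂ] (Fin 4 → ℂ) where
  toFun D := ![D (e 3 1) 0, D (e 3 1) 2, D (e 3 2) 0, D (e 3 1) 1 - 2 * D (e 3 0) 0]
  map_add' D E := by funext k; fin_cases k <;> simp <;> ring
  map_smul' c D := by funext k; fin_cases k <;> simp <;> ring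

lemma L3_surj : Function.Surjective L3 := by
  intro v
  refine ⟨colMap 0 ![v 0, 0, v 1] ![v 2, 0, 0], ?_⟩
  funext k
  fin_cases k <;> simp [L3]

lemma L4_surj : Function.Surjective L4 := by
  intro v
  refine ⟨colMap 0 ![v 0, v 3, v 1] ![v 2, 0, 0], ?_⟩
  funext k
  fin_cases k <;> simp [L4]

theorem stmt11 :
    (∀ Δ : (Fin 3 → ℂ) →ₗ[ℂ] (Fin 3 → ℂ),
      IsLocDer mulA1 Δ ↔
        (Δ (e 3 1) 0 = 0 ∧ Δ (e 3 1) 2 = 0 ∧ Δ (e 3 2) 0 = 0)) ∧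
    Module.finrank ℂ
      (locDerSubmodule 3 mulA1 mulA1_add_left mulA1_add_right
        mulA1_smul_left mulA1_smul_right) = 6 ∧
    Module.finrank ℂ
      (derSubmodule 3 mulA1 mulA1_add_left mulA1_add_right
        mulA1_smul_left mulA1_smul_right) = 5 ∧
    ∃ Δ : (Fin 3 → ℂ) →ₗ[ℂ] (Fin 3 → ℂ), IsLocDer mulA1 Δ ∧ ¬ IsDer mulA1 Δ := by
  
  have hlocker : ∀ Δ : (Fin 3 → ℂ) →ₗ[ℂ] (Fin 3 → ℂ), IsLocDer mulA1 Δ ↔ L3 Δ = 0 := by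
    intro Δ
    rw [isLocDer_iff]
    constructor
    · rintro ⟨h1, h2, h3⟩
      funext k
      fin_cases k <;> simp [L3, h1, h2, h3]
    · intro h
      refine ⟨?_, ?_, ?_⟩
      · simpa [L3] using congrFun h 0
      · simpa [L3] using congrFun h 1
      · simpa [L3] using congrFun h 2
  have hderker : ∀ D : (Fin 3 → ℂ) →ₗ[ℂ] (Fin 3 → ℂ), IsDer mulA1 D ↔ L4 D = 0 := by
    intro D
    rw [isDer_iff]
    constructor
    · rintro ⟨h1, h2, h3, h4⟩
      funext k
      fin_cases k <;> simp [L4, h1, h2, h3, h4]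
    · intro h
      have c0 := congrFun h 0
      have c1 := congrFun h 1
      have c2 := congrFun h 2
      have c3 := congrFun h 3
      simp [L4, sub_eq_zero] at c0 c1 c2 c3
      exact ⟨c0, c1, c2, c3⟩
  have hEq1 : (locDerSubmodule 3 mulA1 mulA1_add_left mulA1_add_right
      mulA1_smul_left mulA1_smul_right) = LinearMap.ker L3 := by
    ext Δ
    rw [LinearMap.mem_ker, ← hlocker]
    exact Iff.rfl
  have hEq2 : (derSubmodule 3 mulA1 mulA1_add_left mulA1_add_right
      mulA1_smul_left mulA1_smul_right) = LinearMap.ker L4 := by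
    ext D
    rw [LinearMap.mem_ker, ← hderker]
    exact Iff.rfl
  have hdim : Module.finrank ℂ ((Fin 3 → ℂ) →ₗ[ℂ] (Fin 3 → ℂ)) = 9 := by
    rw [Module.finrank_linearMap]
    simp
  have hk3 := LinearMap.finrank_range_add_finrank_ker L3
  rw [LinearMap.range_eq_top.mpr L3_surj, finrank_top, hdim] at hk3
  have hc3 : Module.finrank ℂ (Fin 3 → ℂ) = 3 := by simp
  rw [hc3] at hk3
  have hk4 := LinearMap.finrank_range_add_finrank_ker L4
  rw [LinearMap.range_eq_top.mpr L4_surj, finrank_top, hdim] at hk4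
  have hc4 : Module.finrank ℂ (Fin 4 → ℂ) = 4 := by simp
  rw [hc4] at hk4
  refine ⟨fun Δ => isLocDer_iff Δ, ?_, ?_, ?_⟩
  · rw [hEq1]
    omega
  · rw [hEq2]
    omega
  · refine ⟨colMap 0 (e 3 1) 0, ?_, ?_⟩
    · rw [isLocDer_iff]
      refine ⟨?_, ?_, ?_⟩ <;> simp [colMap, e, Pi.single_apply]
    · rw [isDer_iff]
      rintro ⟨-, -, -, h4⟩
      simp [colMap, e, Pi.single_apply] at h4
end

section
/- Let A₁ be the 3-dimensional complex algebra with basis e₁,e₂,e₃ and only nonzero product e₁e₁ = e₂. Define ∇ : A₁ → A₁ by ∇(x₁e₁ + x₂e₂ + x₃e₃) = f(x₁,x₃)e₃, where f(z₁,z₃) = z₁²/z₃ if z₃ ≠ 0 and f(z₁,z₃) = 0 if z₃ = 0. Then ∇ is a 2-local derivation of A₁ which is not a derivation (it is not even additive). -/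
noncomputable def f13 : ℂ → ℂ → ℂ := fun z1 z3 => if z3 ≠ 0 then z1 ^ 2 / z3 else 0

noncomputable def nabla13 : (Fin 3 → ℂ) → (Fin 3 → ℂ) :=
  fun x => f13 (x 0) (x 2) • e 3 2


noncomputable def Dab (α β : ℂ) : (Fin 3 → ℂ) →ₗ[ℂ] (Fin 3 → ℂ) where
  toFun z := (α * z 0 + β * z 2) • e 3 2
  map_add' x y := by
    show (α * ((x+y) 0) + β * ((x+y) 2)) • e 3 2 = _
    rw [show α * ((x + y) 0) + β * ((x + y) 2)
        = (α * x 0 + β * x 2) + (α * y 0 + β * y 2) by simp [Pi.add_apply]; ring,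
      add_smul]
  map_smul' c x := by
    show (α * ((c • x) 0) + β * ((c • x) 2)) • e 3 2 = _
    rw [show α * ((c • x) 0) + β * ((c • x) 2)
        = c * (α * x 0 + β * x 2) by simp [Pi.smul_apply]; ring]
    simp [mul_smul]

lemma Dab_isDer (α β : ℂ) : IsDer mulA1 (Dab α β) := by
  intro x y
  funext k
  have h0 : (e 3 2 : Fin 3 → ℂ) 0 = 0 := by simp [e, Pi.single]
  simp [Dab, mulA1, e, Pi.single_apply]

lemma solve_pair (a c b d : ℂ) :
    ∃ α β : ℂ, α * a + β * c = f13 a c ∧ α * b + β * d = f13 b d := by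
  by_cases hc : c = 0
  · by_cases hd : d = 0
    · exact ⟨0, 0, by simp [f13, hc, hd]⟩
    · refine ⟨0, b ^ 2 / d ^ 2, ?_, ?_⟩
      · simp [f13, hc]
      · simp [f13, hd]
        field_simp
  · by_cases hd : d = 0
    · refine ⟨0, a ^ 2 / c ^ 2, ?_, ?_⟩
      · simp [f13, hc]
        field_simp
      · simp [f13, hd]
    · refine ⟨(a * d + b * c) / (c * d), -(a * b) / (c * d), ?_, ?_⟩
      · simp [f13, hc]
        field_simp
        ring
      · simp [f13, hd]
        field_simp
        ring

theorem stmt13 :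
    (∀ x y : Fin 3 → ℂ, ∃ D : (Fin 3 → ℂ) →ₗ[ℂ] (Fin 3 → ℂ),
      IsDer mulA1 D ∧ nabla13 x = D x ∧ nabla13 y = D y) ∧
    ¬ (∀ u v : Fin 3 → ℂ, nabla13 (u + v) = nabla13 u + nabla13 v) := by
  constructor
  · intro x y
    obtain ⟨α, β, h1, h2⟩ := solve_pair (x 0) (x 2) (y 0) (y 2)
    refine ⟨Dab α β, Dab_isDer α β, ?_, ?_⟩
    · simp [nabla13, Dab, h1]
    · simp [nabla13, Dab, h2]
  · intro h
    have h2 := congrFun (h ![1,0,1] ![0,0,1]) 2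
    simp [nabla13, f13, e, Pi.single, Matrix.cons_val_zero, Pi.add_apply] at h2
end

section
/- Let μ₁,₁ⁿ (n > 3) be the complex algebra with basis e₁,…,eₙ and products eᵢeⱼ = e_{i+j} for 2 ≤ i+j ≤ n−1 (all products involving eₙ, and products with i+j ≥ n, are zero). Then every derivation D of μ₁,₁ⁿ satisfies D(eₙ) ∈ span{e_{n−1}, eₙ}. -/
noncomputable def mul11 (n : ℕ) (x y : Fin n → ℂ) : Fin n → ℂ :=
  fun k => ∑ i : Fin n, ∑ j : Fin n,
    if (i : ℕ) + (j : ℕ) + 1 = (k : ℕ) ∧ (k : ℕ) + 2 ≤ n then x i * y j else 0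

lemma mul11_add_left (n : ℕ) (x y z : Fin n → ℂ) :
    mul11 n (x + y) z = mul11 n x z + mul11 n y z := by
  funext k
  simp only [mul11, Pi.add_apply]
  rw [← Finset.sum_add_distrib]
  refine Finset.sum_congr rfl fun i _ => ?_
  rw [← Finset.sum_add_distrib]
  refine Finset.sum_congr rfl fun j _ => ?_
  split <;> ring

lemma mul11_add_right (n : ℕ) (x y z : Fin n → ℂ) :
    mul11 n x (y + z) = mul11 n x y + mul11 n x z := by
  funext k
  simp only [mul11, Pi.add_apply]
  rw [← Finset.sum_add_distrib]
  refine Finset.sum_congr rfl fun i _ => ?_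
  rw [← Finset.sum_add_distrib]
  refine Finset.sum_congr rfl fun j _ => ?_
  split <;> ring

lemma mul11_smul_left (n : ℕ) (c : ℂ) (x y : Fin n → ℂ) :
    mul11 n (c • x) y = c • mul11 n x y := by
  funext k
  simp only [mul11, Pi.smul_apply, smul_eq_mul, Finset.mul_sum]
  refine Finset.sum_congr rfl fun i _ => ?_
  refine Finset.sum_congr rfl fun j _ => ?_
  split <;> ring

lemma mul11_smul_right (n : ℕ) (c : ℂ) (x y : Fin n → ℂ) :
    mul11 n x (c • y) = c • mul11 n x y := by
  funext k
  simp only [mul11, Pi.smul_apply, smul_eq_mul, Finset.mul_sum]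
  refine Finset.sum_congr rfl fun i _ => ?_
  refine Finset.sum_congr rfl fun j _ => ?_
  split <;> ring

theorem stmt14 (n : ℕ) (hn : 3 < n)
    (D : (Fin n → ℂ) →ₗ[ℂ] (Fin n → ℂ)) (hD : IsDer (mul11 n) D) :
    ∀ k : Fin n, (k : ℕ) + 2 < n →
      D (e n ⟨n - 1, by omega⟩) k = 0 := by
  intro k hk
  have h0 : (0:ℕ) < n := by omega
  set en : Fin n → ℂ := e n ⟨n - 1, by omega⟩ with hen
  -- anything times en is zero
  have hzero : ∀ x : Fin n → ℂ, mul11 n x en = 0 := by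
    intro x
    funext m
    simp only [mul11, Pi.zero_apply]
    refine Finset.sum_eq_zero fun i _ => Finset.sum_eq_zero fun j _ => ?_
    split
    · rename_i h
      have hj : en j = 0 := by
        simp only [hen, e, Pi.single_apply]
        rw [if_neg]
        intro hij
        subst hij
        simp only [] at h
        omega
      simp [hj]
    · rfl
  have key := hD (e n ⟨0, h0⟩) en
  rw [hzero, hzero, map_zero, zero_add] at key
  have := congrFun key.symm ⟨(k : ℕ) + 1, by omega⟩
  simp only [mul11, Pi.zero_apply] at this
  rw [Finset.sum_eq_single (⟨0, h0⟩ : Fin n)] at this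
  · rw [Finset.sum_eq_single k] at this
    · simp only [e, Pi.single_eq_same] at this
      rw [if_pos (by simp; omega)] at this
      simpa using this
    · intro j _ hj
      rw [if_neg]
      rintro ⟨h1, -⟩
      simp only [Fin.val_mk] at h1
      exact hj (Fin.ext (by omega))
    · intro h; exact absurd (Finset.mem_univ k) h
  · intro i _ hi
    refine Finset.sum_eq_zero fun j _ => ?_
    have : e n ⟨0, h0⟩ i = 0 := by
      simp only [e, Pi.single_apply]
      rw [if_neg]
      exact hi
    simp [this]
  · intro h; exact absurd (Finset.mem_univ _) h
end
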